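/- Let d ≥ 5 and m ≥ d be integers, let g ≥ 1 be a real number, and consider the MBSP instance given by the zipper DAG Z(d,m) with P = 2 processors, cache capacity r = d+2, communication cost g, and synchronization cost L = 0. Let OPT be the minimum synchronous cost over all valid schedules, and let OPT' be the minimum synchronous cost over those valid schedules in which every COMPUTE transition of a node v_i (i ∈ [m]) occurs on processor 1 and every COMPUTE transition of a node u_i (i ∈ [m]) occurs on processor 2. Then OPT' ≥ (d/10)·OPT. -/

import Mathlib

/-!
Upper bound on `OPT`: processor `p` keeps the `d` sources `H_p` in its cache. In step `j` it
computes node `j` of the chain whose `j`-th node is fed by `H_p`; the chain predecessor of that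
node was computed by the other processor in step `j - 1` and is the only value loaded. After
loading `H_p` once, each step costs `1 + 2g`, so `OPT ≤ d g + m (1 + 2g)`.

Lower bound on `OPT'`: right after the processor computing all `v_i` computes `v_K`, its cache of
size `d + 2` holds `v_K`, `v_(K-1)` and the `d` sources of `v_K`, so none of the `d` sources of
`v_(K+1)`, which form the other group. Hence `K d + #(sources of v_K in its cache)`, with `K` a
bound on the indices of the `v`-nodes present anywhere, never exceeds its number of loads plus
`d + 1`. As `v_m` must reach slow memory, it loads at least `m d - d - 1` values, so
`OPT' ≥ (m d - d - 1) g`, which is at least `(d/10) (d g + m (1 + 2g))` for `d ≥ 5`, `m ≥ d`,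
`g ≥ 1`. The restricted set is nonempty (each processor follows its own chain, reloading the
sources at every step), so its infimum is not the junk value `0`.
-/

namespace MBSP

/-- A transition (pebbling move) of a single processor. -/
inductive Op (ν : Type) where
  | load : ν → Op ν
  | save : ν → Op ν
  | compute : ν → Op ν
  | delete : ν → Op ν
deriving DecidableEq

/-- An MBSP instance: a DAG with compute weights `ω`, memory weights `μ`,
`P` processors, cache capacity `r`, communication cost `g` and synchronization cost `L`. -/
structure Inst (ν : Type) where
  edge : ν → ν → Prop
  ω : ν → ℝ
  μ : ν → ℝ
  P : ℕ
  r : ℝ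
  g : ℝ
  L : ℝ

variable {ν : Type} [DecidableEq ν]

def isSource (I : Inst ν) (v : ν) : Prop := ¬ ∃ u, I.edge u v

def isSink (I : Inst ν) (v : ν) : Prop := ¬ ∃ u, I.edge v u

def Acyclic (I : Inst ν) : Prop := ∀ v, ¬ Relation.TransGen I.edge v v

def opCost (I : Inst ν) : Op ν → ℝ
  | .load v => I.μ v * I.g
  | .save v => I.μ v * I.g
  | .compute v => I.ω v
  | .delete _ => 0

def applyOp (R B : Finset ν) : Op ν → Finset ν × Finset ν
  | .load v => (insert v R, B)
  | .save v => (R, insert v B)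
  | .compute v => (insert v R, B)
  | .delete v => (R.erase v, B)

def opOK (I : Inst ν) (R B : Finset ν) : Op ν → Prop
  | .load v => v ∈ B
  | .save v => v ∈ R
  | .compute v => (∃ u, I.edge u v) ∧ ∀ u, I.edge u v → u ∈ R
  | .delete _ => True

/-- The memory bound for a cache content `R`. -/
def memOK (I : Inst ν) (R : Finset ν) : Prop := ∑ v ∈ R, I.μ v ≤ I.r

/-- Run a sequence of transitions of one processor on a pair (cache, slow memory). -/
def run (R B : Finset ν) : List (Op ν) → Finset ν × Finset ν
  | [] => (R, B)
  | op :: rest => run (applyOp R B op).1 (applyOp R B op).2 rest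

/-- Validity of a sequence of transitions of one processor: every precondition holds
when the transition is applied and the memory bound holds throughout. -/
def seqValid (I : Inst ν) (R B : Finset ν) : List (Op ν) → Prop
  | [] => True
  | op :: rest => opOK I R B op ∧ memOK I (applyOp R B op).1 ∧
      seqValid I (applyOp R B op).1 (applyOp R B op).2 rest

/-- A superstep: for every processor, a compute phase (computes and deletes),
then a save phase, a delete phase and a load phase. -/
structure Superstep (ν : Type) (P : ℕ) where
  comp : Fin P → List (Op ν)
  save : Fin P → List ν
  del : Fin P → List ν
  load : Fin P → List ν

structure Config (ν : Type) (P : ℕ) where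
  R : Fin P → Finset ν
  B : Finset ν

abbrev Schedule (ν : Type) (P : ℕ) := List (Superstep ν P)

variable {P : ℕ}

def compOnly (l : List (Op ν)) : Prop :=
  ∀ op ∈ l, (∃ v, op = Op.compute v) ∨ (∃ v, op = Op.delete v)

def afterComp (c : Config ν P) (S : Superstep ν P) (p : Fin P) : Finset ν :=
  (run (c.R p) c.B (S.comp p)).1

/-- The shared slow memory after the save phases of all processors. -/
def newB (c : Config ν P) (S : Superstep ν P) : Finset ν :=
  c.B ∪ Finset.univ.biUnion (fun p => (S.save p).toFinset)

def afterDel (c : Config ν P) (S : Superstep ν P) (p : Fin P) : Finset ν :=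
  (S.del p).foldl Finset.erase (afterComp c S p)

def afterLoad (c : Config ν P) (S : Superstep ν P) (p : Fin P) : Finset ν :=
  afterDel c S p ∪ (S.load p).toFinset

/-- The configuration reached after executing a superstep. -/
def stepConfig (c : Config ν P) (S : Superstep ν P) : Config ν P :=
  ⟨fun p => afterLoad c S p, newB c S⟩

/-- Validity of a superstep at a configuration. -/
def ssValid (I : Inst ν) (c : Config ν I.P) (S : Superstep ν I.P) : Prop :=
  (∀ p, compOnly (S.comp p)) ∧
  (∀ p, seqValid I (c.R p) c.B (S.comp p)) ∧
  (∀ p, ∀ v ∈ S.save p, v ∈ afterComp c S p) ∧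
  (∀ p, ∀ v ∈ S.load p, v ∈ newB c S) ∧
  (∀ p, memOK I (afterLoad c S p))

def runSched (c : Config ν P) : Schedule ν P → Config ν P
  | [] => c
  | S :: rest => runSched (stepConfig c S) rest

def schedValidFrom (I : Inst ν) (c : Config ν I.P) : Schedule ν I.P → Prop
  | [] => True
  | S :: rest => ssValid I c S ∧ schedValidFrom I (stepConfig c S) rest

/-- `B` is exactly the set of sources of the DAG. -/
def initB (I : Inst ν) (B : Finset ν) : Prop := ∀ v, v ∈ B ↔ isSource I v

/-- A valid MBSP schedule: starts with empty caches and the sources in slow memory,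
every transition is legal and the memory bound holds throughout, and at the end
every sink is in slow memory. -/
def Valid (I : Inst ν) (sched : Schedule ν I.P) : Prop :=
  ∃ B0 : Finset ν, initB I B0 ∧
    schedValidFrom I ⟨fun _ => ∅, B0⟩ sched ∧
    ∀ v, isSink I v → v ∈ (runSched (⟨fun _ => ∅, B0⟩ : Config ν I.P) sched).B

def listCost (I : Inst ν) (l : List (Op ν)) : ℝ := (l.map (opCost I)).sum

def ioCost (I : Inst ν) (l : List ν) : ℝ := (l.map (fun v => I.μ v * I.g)).sum

/-- The synchronous cost of a superstep. -/
noncomputable def ssCost (I : Inst ν) (S : Superstep ν I.P) : ℝ :=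
  (⨆ p : Fin I.P, listCost I (S.comp p)) + (⨆ p : Fin I.P, ioCost I (S.save p)) +
    (⨆ p : Fin I.P, ioCost I (S.load p)) + I.L

/-- The synchronous cost of a schedule. -/
noncomputable def syncCost (I : Inst ν) (sched : Schedule ν I.P) : ℝ :=
  (sched.map (ssCost I)).sum

/-- Finishing times of the saves in a save phase starting at time `t`. -/
def saveFinishes (I : Inst ν) : ℝ → List ν → List (ν × ℝ)
  | _, [] => []
  | t, v :: rest => (v, t + I.μ v * I.g) :: saveFinishes I (t + I.μ v * I.g) rest

def minSaveTime (entries : List (ν × ℝ)) (v : ν) : Option ℝ :=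
  ((entries.filter (fun e => e.1 == v)).map Prod.snd).min?

/-- Finishing time of a load phase: each load waits for the value to be available
in slow memory (time `Γ v`). -/
def loadFold (I : Inst ν) (Γ : ν → Option ℝ) : ℝ → List ν → ℝ
  | t, [] => t
  | t, v :: rest => loadFold I Γ (max t ((Γ v).getD 0) + I.μ v * I.g) rest

/-- One superstep of the asynchronous execution: updates the finishing time of
every processor and the availability times `Γ` of the values in slow memory. -/
def asyncSS (I : Inst ν) (S : Superstep ν I.P)
    (st : (Fin I.P → ℝ) × (ν → Option ℝ)) : (Fin I.P → ℝ) × (ν → Option ℝ) :=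
  let t1 : Fin I.P → ℝ := fun p => st.1 p + listCost I (S.comp p)
  let entries : List (ν × ℝ) :=
    ((List.finRange I.P).map (fun p => saveFinishes I (t1 p) (S.save p))).flatten
  let Γ' : ν → Option ℝ := fun v => (st.2 v).orElse (fun _ => minSaveTime entries v)
  let t2 : Fin I.P → ℝ := fun p => t1 p + ioCost I (S.save p)
  (fun p => loadFold I Γ' (t2 p) (S.load p), Γ')

def asyncRun (I : Inst ν) (st : (Fin I.P → ℝ) × (ν → Option ℝ)) :
    Schedule ν I.P → (Fin I.P → ℝ) × (ν → Option ℝ)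
  | [] => st
  | S :: rest => asyncRun I (asyncSS I S st) rest

/-- The asynchronous cost (makespan) of a schedule. -/
noncomputable def asyncCost (I : Inst ν) (sched : Schedule ν I.P) : ℝ :=
  ⨆ p : Fin I.P, (asyncRun I (fun _ => (0 : ℝ), fun _ => none) sched).1 p

end MBSP

namespace MBSP

/-- Nodes of the zipper DAG `Z(d,m)`: two groups `H₁`, `H₂` of `d` source nodes
each, and two chains `v_1,…,v_m` and `u_1,…,u_m` (index `i ∈ [m]` is `Fin`-value `i-1`). -/
inductive ZNode (d m : ℕ) where
  | h1 : Fin d → ZNode d m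
  | h2 : Fin d → ZNode d m
  | v : Fin m → ZNode d m
  | u : Fin m → ZNode d m
deriving DecidableEq, Fintype

/-- Edges of the zipper DAG `Z(d,m)`. -/
def zEdge (d m : ℕ) : ZNode d m → ZNode d m → Prop
  | .v i, .v j => (j : ℕ) = (i : ℕ) + 1
  | .u i, .u j => (j : ℕ) = (i : ℕ) + 1
  | .h1 _, .u i => Odd ((i : ℕ) + 1)
  | .h1 _, .v i => Even ((i : ℕ) + 1)
  | .h2 _, .v i => Odd ((i : ℕ) + 1)
  | .h2 _, .u i => Even ((i : ℕ) + 1)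
  | _, _ => False

/-- The MBSP instance on the zipper DAG `Z(d,m)` with `P = 2` processors, cache
capacity `r`, communication cost `g` and synchronization cost `L`; all compute and
memory weights are `1`. -/
def zipper (d m : ℕ) (r g L : ℝ) : Inst (ZNode d m) where
  edge := zEdge d m
  ω := fun _ => 1
  μ := fun _ => 1
  P := 2
  r := r
  g := g
  L := L

end MBSP

namespace MBSP

open Finset

section Generic

variable {ν : Type}

theorem foldl_erase_eq_sdiff {α : Type*} [DecidableEq α] (l : List α) (s : Finset α) :
    l.foldl Finset.erase s = s \ l.toFinset := by
  induction l generalizing s with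
  | nil => simp
  | cons a t ih =>
    rw [List.foldl_cons, ih]
    ext x
    simp only [mem_sdiff, mem_erase, List.toFinset_cons, mem_insert, List.mem_toFinset]
    tauto

theorem afterDel_eq [DecidableEq ν] {P : ℕ} (c : Config ν P) (S : Superstep ν P) (p : Fin P) :
    afterDel c S p = afterComp c S p \ (S.del p).toFinset :=
  foldl_erase_eq_sdiff _ _

theorem afterLoad_subset [DecidableEq ν] {P : ℕ} (c : Config ν P)
    (S : Superstep ν P) (p : Fin P) :
    afterLoad c S p ⊆ afterComp c S p ∪ (S.load p).toFinset :=
  union_subset_union_left (by rw [afterDel_eq]; exact sdiff_subset)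

theorem run_induction [DecidableEq ν] {I : Inst ν} {B : Finset ν} {Q : Finset ν → Prop}
    (hdel : ∀ R v, Q R → Q (R.erase v)) :
    ∀ {l : List (Op ν)} {R : Finset ν}, compOnly l → seqValid I R B l →
      (∀ R v, Op.compute v ∈ l → opOK I R B (.compute v) → memOK I (insert v R) → Q R →
        Q (insert v R)) →
      Q R → Q (run R B l).1
  | [], _, _, _, _, hQ => hQ
  | op :: l, R, hl, ⟨hok, hmem, hrest⟩, hcomp, hQ => by
    have hl' : compOnly l := fun o ho => hl o (List.mem_cons_of_mem _ ho)
    have hcomp' := fun R v hv => hcomp R v (List.mem_cons_of_mem _ hv)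
    rcases hl op List.mem_cons_self with ⟨v, rfl⟩ | ⟨v, rfl⟩
    · exact run_induction (l := l) hdel hl' hrest hcomp'
        (hcomp R v List.mem_cons_self hok hmem hQ)
    · exact run_induction (l := l) hdel hl' hrest hcomp' (hdel R v hQ)

theorem runSched_induction [DecidableEq ν] {I : Inst ν} {Inv : ℕ → Config ν I.P → Prop}
    (f : Superstep ν I.P → ℕ) :
    ∀ {sched : Schedule ν I.P} {c : Config ν I.P} {ℓ : ℕ}, schedValidFrom I c sched →
      (∀ S ∈ sched, ∀ c ℓ, ssValid I c S → Inv ℓ c → Inv (ℓ + f S) (stepConfig c S)) →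
      Inv ℓ c → Inv (ℓ + (sched.map f).sum) (runSched c sched)
  | [], _, ℓ, _, _, h => by simpa [runSched] using h
  | S :: sched, c, ℓ, ⟨hS, hrest⟩, hstep, h => by
    have := runSched_induction f hrest (fun T hT => hstep T (List.mem_cons_of_mem _ hT))
      (hstep S List.mem_cons_self c ℓ hS h)
    simpa [runSched, add_assoc] using this

theorem runSched_append [DecidableEq ν] {P : ℕ} (c : Config ν P) (s t : Schedule ν P) :
    runSched c (s ++ t) = runSched (runSched c s) t := by
  induction s generalizing c with
  | nil => rfl
  | cons S s ih => exact ih _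

theorem schedValidFrom_append [DecidableEq ν] {I : Inst ν} (c : Config ν I.P)
    (s t : Schedule ν I.P) :
    schedValidFrom I c (s ++ t) ↔
      schedValidFrom I c s ∧ schedValidFrom I (runSched c s) t := by
  induction s generalizing c with
  | nil => simp [schedValidFrom, runSched]
  | cons S s ih => simp only [List.cons_append, schedValidFrom, runSched, ih, and_assoc]

structure CostsNonneg (I : Inst ν) : Prop where
  ω_nonneg : ∀ v, 0 ≤ I.ω v
  μ_nonneg : ∀ v, 0 ≤ I.μ v
  g_nonneg : 0 ≤ I.g
  L_nonneg : 0 ≤ I.L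

namespace CostsNonneg

variable {I : Inst ν}

theorem listCost_nonneg (hI : CostsNonneg I) (l : List (Op ν)) : 0 ≤ listCost I l :=
  List.sum_nonneg fun x hx => by
    obtain ⟨op, -, rfl⟩ := List.mem_map.1 hx
    cases op <;> simp [opCost, hI.ω_nonneg, mul_nonneg (hI.μ_nonneg _) hI.g_nonneg]

theorem ioCost_nonneg (hI : CostsNonneg I) (l : List ν) : 0 ≤ ioCost I l :=
  List.sum_nonneg fun x hx => by
    obtain ⟨v, -, rfl⟩ := List.mem_map.1 hx
    exact mul_nonneg (hI.μ_nonneg v) hI.g_nonneg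

theorem ioCost_load_le_ssCost (hI : CostsNonneg I) (S : Superstep ν I.P) (p : Fin I.P) :
    ioCost I (S.load p) ≤ ssCost I S := by
  have hcomp := Real.iSup_nonneg fun q => hI.listCost_nonneg (S.comp q)
  have hsave := Real.iSup_nonneg fun q => hI.ioCost_nonneg (S.save q)
  have hload : ioCost I (S.load p) ≤ ⨆ q, ioCost I (S.load q) :=
    le_ciSup (f := fun q => ioCost I (S.load q)) (Set.finite_range _).bddAbove p
  unfold ssCost
  linarith [hI.L_nonneg]

theorem sum_ioCost_load_le_syncCost (hI : CostsNonneg I) (p : Fin I.P)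
    (sched : Schedule ν I.P) :
    (sched.map fun S => ioCost I (S.load p)).sum ≤ syncCost I sched :=
  List.sum_le_sum fun S _ => hI.ioCost_load_le_ssCost S p

theorem syncCost_nonneg (hI : CostsNonneg I) (sched : Schedule ν I.P) :
    0 ≤ syncCost I sched :=
  List.sum_nonneg fun x hx => by
    obtain ⟨S, -, rfl⟩ := List.mem_map.1 hx
    unfold ssCost
    have := Real.iSup_nonneg fun q => hI.listCost_nonneg (S.comp q)
    have := Real.iSup_nonneg fun q => hI.ioCost_nonneg (S.save q)
    have := Real.iSup_nonneg fun q => hI.ioCost_nonneg (S.load q)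
    linarith [hI.L_nonneg]

end CostsNonneg

theorem ssCost_le {I : Inst ν} {S : Superstep ν I.P} {a b c : ℝ}
    (ha : ∀ p, listCost I (S.comp p) ≤ a) (hb : ∀ p, ioCost I (S.save p) ≤ b)
    (hc : ∀ p, ioCost I (S.load p) ≤ c) (ha₀ : 0 ≤ a) (hb₀ : 0 ≤ b) (hc₀ : 0 ≤ c) :
    ssCost I S ≤ a + b + c + I.L := by
  unfold ssCost
  gcongr
  exacts [Real.iSup_le ha ha₀, Real.iSup_le hb hb₀, Real.iSup_le hc hc₀]

end Generic

section Pipeline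

variable {ν : Type} [DecidableEq ν] {P : ℕ}

noncomputable def transition (C C' : Fin P → Finset ν) (x : Fin P → ν) : Superstep ν P where
  comp p := [.compute (x p)]
  save p := [x p]
  del p := (insert (x p) (C p) \ C' p).toList
  load p := (C' p \ insert (x p) (C p)).toList

noncomputable def loadStep (C : Fin P → Finset ν) : Superstep ν P where
  comp _ := []
  save _ := []
  del _ := []
  load p := (C p).toList

noncomputable def pipeline (C : ℕ → Fin P → Finset ν) (x : ℕ → Fin P → ν) (n : ℕ) :
    Schedule ν P :=
  loadStep (C 0) :: (List.range n).map fun j => transition (C j) (C (j + 1)) (x j)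

theorem pipeline_succ (C : ℕ → Fin P → Finset ν) (x : ℕ → Fin P → ν) (n : ℕ) :
    pipeline C x (n + 1) = pipeline C x n ++ [transition (C n) (C (n + 1)) (x n)] := by
  simp [pipeline, List.range_succ]

theorem afterLoad_transition (C C' : Fin P → Finset ν) (x : Fin P → ν) (B : Finset ν)
    (p : Fin P) : afterLoad ⟨C, B⟩ (transition C C' x) p = C' p := by
  rw [afterLoad, afterDel_eq]
  ext v
  simp only [afterComp, transition, run, applyOp, Finset.toList_toFinset, mem_union,
    mem_sdiff, mem_insert]
  tauto

theorem newB_transition (C C' : Fin P → Finset ν) (x : Fin P → ν) (B : Finset ν) :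
    newB ⟨C, B⟩ (transition C C' x) = B ∪ univ.image x := by
  ext v
  simp [newB, transition, eq_comm]

theorem ssValid_transition {I : Inst ν} {C C' : Fin I.P → Finset ν} {x : Fin I.P → ν}
    {B : Finset ν} (hsrc : ∀ p, ∃ u, I.edge u (x p)) (hpar : ∀ p u, I.edge u (x p) → u ∈ C p)
    (hmem : ∀ p, memOK I (insert (x p) (C p)))
    (hnext : ∀ p, C' p ⊆ insert (x p) (C p) ∪ (B ∪ univ.image x))
    (hmem' : ∀ p, memOK I (C' p)) :
    ssValid I ⟨C, B⟩ (transition C C' x) := by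
  refine ⟨fun p op hop => ?_, fun p => ⟨⟨hsrc p, hpar p⟩, hmem p, trivial⟩,
    fun p v hv => ?_, fun p v hv => ?_, fun p => ?_⟩
  · simp only [transition, List.mem_singleton] at hop
    exact Or.inl ⟨_, hop⟩
  · simp only [transition, List.mem_singleton] at hv
    rw [hv]
    exact mem_insert_self _ _
  · simp only [transition, mem_toList, mem_sdiff] at hv
    rw [newB_transition]
    have := hnext p hv.1
    simp only [mem_union] at this ⊢
    exact this.resolve_left hv.2
  · rw [afterLoad_transition]
    exact hmem' p

theorem afterLoad_loadStep (C : Fin P → Finset ν) (B : Finset ν) (p : Fin P) :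
    afterLoad ⟨fun _ => ∅, B⟩ (loadStep C) p = C p := by
  simp [afterLoad, afterDel, afterComp, loadStep, run]

theorem newB_loadStep (C : Fin P → Finset ν) (B : Finset ν) :
    newB ⟨fun _ => ∅, B⟩ (loadStep C) = B := by
  simp [newB, loadStep]

theorem ssValid_loadStep {I : Inst ν} {C : Fin I.P → Finset ν} {B : Finset ν}
    (hC : ∀ p, C p ⊆ B) (hmem : ∀ p, memOK I (C p)) :
    ssValid I ⟨fun _ => ∅, B⟩ (loadStep C) := by
  refine ⟨fun p op hop => ?_, fun p => trivial, fun p v hv => ?_, fun p v hv => ?_,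
    fun p => ?_⟩
  · simp [loadStep] at hop
  · simp [loadStep] at hv
  · rw [newB_loadStep]
    exact hC p (mem_toList.1 hv)
  · rw [afterLoad_loadStep]
    exact hmem p

/-- `C j p` is the cache of processor `p` right before it computes `x j p`. -/
structure PipelinePlan (I : Inst ν) (B₀ : Finset ν) (C : ℕ → Fin I.P → Finset ν)
    (x : ℕ → Fin I.P → ν) (n : ℕ) : Prop where
  initial_subset : ∀ p, C 0 p ⊆ B₀
  memOK_cache : ∀ j ≤ n, ∀ p, memOK I (C j p)
  has_parent : ∀ j < n, ∀ p, ∃ u, I.edge u (x j p)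
  parent_mem : ∀ j < n, ∀ p u, I.edge u (x j p) → u ∈ C j p
  memOK_insert : ∀ j < n, ∀ p, memOK I (insert (x j p) (C j p))
  next_subset : ∀ j < n, ∀ p, C (j + 1) p ⊆ insert (x j p) (C j p) ∪ (B₀ ∪ univ.image (x j))

theorem PipelinePlan.schedValidFrom_runSched {I : Inst ν} {B₀ : Finset ν}
    {C : ℕ → Fin I.P → Finset ν} {x : ℕ → Fin I.P → ν} {n : ℕ} (h : PipelinePlan I B₀ C x n) :
    ∀ k ≤ n, schedValidFrom I ⟨fun _ => ∅, B₀⟩ (pipeline C x k) ∧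
      runSched ⟨fun _ => ∅, B₀⟩ (pipeline C x k) =
        ⟨C k, B₀ ∪ (range k).biUnion fun j => univ.image (x j)⟩
  | 0, _ => by
    refine ⟨⟨ssValid_loadStep h.initial_subset (h.memOK_cache 0 n.zero_le), trivial⟩, ?_⟩
    show stepConfig _ (loadStep (C 0)) = _
    simp only [stepConfig, afterLoad_loadStep, newB_loadStep, range_zero, biUnion_empty,
      union_empty]
  | k + 1, hk => by
    obtain ⟨hvalid, hrun⟩ := h.schedValidFrom_runSched k (by omega)
    have hstep : ssValid I (runSched ⟨fun _ => ∅, B₀⟩ (pipeline C x k))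
        (transition (C k) (C (k + 1)) (x k)) := by
      rw [hrun]
      refine ssValid_transition (h.has_parent k hk) (h.parent_mem k hk) (h.memOK_insert k hk)
        (fun p => (h.next_subset k hk p).trans <|
          union_subset_union_right (union_subset_union_left subset_union_left))
        (h.memOK_cache (k + 1) hk)
    rw [pipeline_succ, schedValidFrom_append, runSched_append]
    refine ⟨⟨hvalid, hstep, trivial⟩, ?_⟩
    show stepConfig _ _ = _
    rw [hrun]
    simp only [stepConfig, afterLoad_transition, newB_transition, range_add_one,
      biUnion_insert, union_comm, union_left_comm]

theorem PipelinePlan.valid {I : Inst ν} {B₀ : Finset ν} {C : ℕ → Fin I.P → Finset ν}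
    {x : ℕ → Fin I.P → ν} {n : ℕ} (h : PipelinePlan I B₀ C x n) (hB₀ : initB I B₀)
    (hsink : ∀ v, isSink I v → ∃ j < n, ∃ p, x j p = v) :
    Valid I (pipeline C x n) := by
  obtain ⟨hvalid, hrun⟩ := h.schedValidFrom_runSched n le_rfl
  refine ⟨B₀, hB₀, hvalid, fun v hv => ?_⟩
  obtain ⟨j, hj, p, rfl⟩ := hsink v hv
  rw [hrun]
  exact mem_union_right _
    (mem_biUnion.2 ⟨j, mem_range.2 hj, mem_image.2 ⟨p, mem_univ p, rfl⟩⟩)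

theorem mem_pipeline_comp {C : ℕ → Fin P → Finset ν} {x : ℕ → Fin P → ν} {n : ℕ}
    {S : Superstep ν P} (hS : S ∈ pipeline C x n) {p : Fin P} {v : ν}
    (hv : Op.compute v ∈ S.comp p) : ∃ j < n, x j p = v := by
  rcases List.mem_cons.1 hS with rfl | hS
  · simp [loadStep] at hv
  · obtain ⟨j, hj, rfl⟩ := List.mem_map.1 hS
    simp only [transition, List.mem_singleton, Op.compute.injEq] at hv
    exact ⟨j, List.mem_range.1 hj, hv.symm⟩

theorem syncCost_pipeline_le {I : Inst ν} {C : ℕ → Fin I.P → Finset ν}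
    {x : ℕ → Fin I.P → ν} {n : ℕ} {a₀ a : ℝ} (h₀ : ssCost I (loadStep (C 0)) ≤ a₀)
    (h : ∀ j < n, ssCost I (transition (C j) (C (j + 1)) (x j)) ≤ a) :
    syncCost I (pipeline C x n) ≤ a₀ + n * a := by
  have hsum := List.sum_le_card_nsmul
    (((List.range n).map fun j => transition (C j) (C (j + 1)) (x j)).map (ssCost I)) a
    (by simpa using fun j hj => h j hj)
  simp only [List.length_map, List.length_range, nsmul_eq_mul] at hsum
  simp only [syncCost, pipeline, List.map_cons, List.sum_cons]
  linarith

end Pipeline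

section Zipper

variable {d m : ℕ}

theorem memOK_zipper_iff {r g L : ℝ} {R : Finset (ZNode d m)} :
    memOK (zipper d m r g L) R ↔ (#R : ℝ) ≤ r := by
  simp [memOK, zipper]

theorem ioCost_zipper {r g L : ℝ} (l : List (ZNode d m)) :
    ioCost (zipper d m r g L) l = l.length * g := by
  simp [ioCost, zipper]

theorem costsNonneg_zipper {r g L : ℝ} (hg : 0 ≤ g) (hL : 0 ≤ L) :
    CostsNonneg (zipper d m r g L) :=
  ⟨fun _ => zero_le_one, fun _ => zero_le_one, hg, hL⟩

def hGroup (k : ℕ) : Finset (ZNode d m) :=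
  if Even k then univ.image ZNode.h1 else univ.image ZNode.h2

@[simp] theorem h1_mem_hGroup {k : ℕ} {a : Fin d} :
    ZNode.h1 a ∈ (hGroup k : Finset (ZNode d m)) ↔ Even k := by
  by_cases h : Even k <;> simp [hGroup, h]

@[simp] theorem h2_mem_hGroup {k : ℕ} {a : Fin d} :
    ZNode.h2 a ∈ (hGroup k : Finset (ZNode d m)) ↔ ¬ Even k := by
  by_cases h : Even k <;> simp [hGroup, h]

@[simp] theorem v_notMem_hGroup {k : ℕ} {i : Fin m} :
    ZNode.v i ∉ (hGroup k : Finset (ZNode d m)) := by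
  unfold hGroup; split_ifs <;> simp

@[simp] theorem u_notMem_hGroup {k : ℕ} {i : Fin m} :
    ZNode.u i ∉ (hGroup k : Finset (ZNode d m)) := by
  unfold hGroup; split_ifs <;> simp

theorem card_hGroup (k : ℕ) : #(hGroup k : Finset (ZNode d m)) = d := by
  unfold hGroup
  split_ifs
  · rw [card_image_of_injective _ fun _ _ => ZNode.h1.inj, card_univ, Fintype.card_fin]
  · rw [card_image_of_injective _ fun _ _ => ZNode.h2.inj, card_univ, Fintype.card_fin]

theorem hGroup_congr {k l : ℕ} (h : k % 2 = l % 2) :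
    (hGroup k : Finset (ZNode d m)) = hGroup l := by
  simp only [hGroup, Nat.even_iff, h]

theorem disjoint_hGroup_succ (k : ℕ) :
    Disjoint (hGroup k : Finset (ZNode d m)) (hGroup (k + 1)) := by
  rw [disjoint_left]
  intro w hk hk1
  cases w <;> simp_all [Nat.even_add_one]

theorem hGroup_subset_sources (k : ℕ) :
    (hGroup k : Finset (ZNode d m)) ⊆ hGroup 0 ∪ hGroup 1 := by
  rcases Nat.even_or_odd k with h | h
  · exact (hGroup_congr (Nat.even_iff.1 h)).subset.trans subset_union_left
  · exact (hGroup_congr (Nat.odd_iff.1 h)).subset.trans subset_union_right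

theorem card_le_of_memOK_zipper {r g L : ℝ} (hr : r ≤ d + 2) {R : Finset (ZNode d m)}
    (h : memOK (zipper d m r g L) R) : #R ≤ d + 2 := by
  have := memOK_zipper_iff.1 h
  exact_mod_cast this.trans hr

theorem memOK_zipper_of_card_le {r g L : ℝ} (hr : (d : ℝ) + 2 ≤ r) {R : Finset (ZNode d m)}
    (h : #R ≤ d + 2) : memOK (zipper d m r g L) R :=
  memOK_zipper_iff.2 (le_trans (by exact_mod_cast h) hr)

variable [NeZero m]

def chainNode (c : Fin 2) (i : ℕ) : ZNode d m :=
  if c = 0 then .v (Fin.ofNat m i) else .u (Fin.ofNat m i)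

def chainParents (c : Fin 2) (i : ℕ) : Finset (ZNode d m) :=
  if i = 0 then hGroup (c.val + i + 1)
  else insert (chainNode c (i - 1)) (hGroup (c.val + i + 1))

theorem mem_chainParents {c : Fin 2} {i : ℕ} {w : ZNode d m} :
    w ∈ chainParents c i ↔
      w ∈ hGroup (c.val + i + 1) ∨ (i ≠ 0 ∧ w = chainNode c (i - 1)) := by
  unfold chainParents
  split_ifs <;> simp [*, or_comm]

theorem zEdge_chainNode_iff {c : Fin 2} {i : ℕ} (hi : i < m) {w : ZNode d m} :
    zEdge d m w (chainNode c i) ↔ w ∈ chainParents c i := by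
  have hi' : (i - 1) % m = i - 1 := Nat.mod_eq_of_lt (by omega)
  rw [mem_chainParents]
  fin_cases c <;> cases w <;>
    simp [chainNode, zEdge, Fin.ext_iff, Nat.mod_eq_of_lt hi, hi', parity_simps] <;> omega

theorem chainNode_zero (i : Fin m) : chainNode 0 i = (ZNode.v i : ZNode d m) := by
  simp [chainNode]

theorem hGroup_subset_chainParents (c : Fin 2) (i : ℕ) :
    hGroup (c.val + i + 1) ⊆ (chainParents c i : Finset (ZNode d m)) :=
  fun _ hw => mem_chainParents.2 (Or.inl hw)

theorem chainParents_subset (c : Fin 2) (i : ℕ) :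
    chainParents c i ⊆
      insert (chainNode c (i - 1)) (hGroup (c.val + i + 1) : Finset (ZNode d m)) := by
  intro w hw
  rcases mem_chainParents.1 hw with hw | ⟨-, rfl⟩
  exacts [mem_insert_of_mem hw, mem_insert_self _ _]

theorem card_chainParents_le (c : Fin 2) (i : ℕ) :
    #(chainParents c i : Finset (ZNode d m)) ≤ d + 1 :=
  (card_le_card (chainParents_subset c i)).trans
    ((card_insert_le _ _).trans (by rw [card_hGroup]))

theorem chainNode_notMem_hGroup (c : Fin 2) (i k : ℕ) :
    (chainNode c i : ZNode d m) ∉ hGroup k := by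
  unfold chainNode; split_ifs <;> simp

theorem chainNode_notMem_chainParents {c : Fin 2} {i : ℕ} (hi : i < m) :
    (chainNode c i : ZNode d m) ∉ chainParents c i := by
  rw [mem_chainParents, not_or, not_and]
  refine ⟨chainNode_notMem_hGroup _ _ _, fun hi0 h => ?_⟩
  have hi' : (i - 1) % m = i - 1 := Nat.mod_eq_of_lt (by omega)
  fin_cases c <;> simp [chainNode, Fin.ext_iff, Nat.mod_eq_of_lt hi, hi'] at h <;> omega

theorem card_chainParents (c : Fin 2) (i : ℕ) :
    #(chainParents c i : Finset (ZNode d m)) = if i = 0 then d else d + 1 := by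
  unfold chainParents
  split_ifs with hi0
  · exact card_hGroup _
  · rw [card_insert_of_notMem (chainNode_notMem_hGroup _ _ _), card_hGroup]

theorem exists_zEdge_chainNode (hd : 0 < d) {c : Fin 2} {i : ℕ} (hi : i < m) :
    ∃ w, zEdge d m w (chainNode c i) := by
  obtain ⟨w, hw⟩ : (hGroup (c.val + i + 1) : Finset (ZNode d m)).Nonempty := by
    rw [← card_pos, card_hGroup]; exact hd
  exact ⟨w, (zEdge_chainNode_iff hi).2 (hGroup_subset_chainParents c i hw)⟩

theorem initB_zipper {r g L : ℝ} (hd : 0 < d) :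
    initB (zipper d m r g L) (hGroup 0 ∪ hGroup 1) := by
  intro w
  have hsrc : ∀ c : Fin 2, ∀ i : Fin m, ¬ isSource (zipper d m r g L) (chainNode c i) :=
    fun c i h => h (exists_zEdge_chainNode hd i.isLt)
  cases w with
  | h1 a => simp [isSource, zipper, zEdge]
  | h2 a => simp [isSource, zipper, zEdge]
  | v i => simpa [chainNode] using hsrc 0 i
  | u i => simpa [chainNode] using hsrc 1 i

theorem isSink_zipper {r g L : ℝ} {w : ZNode d m} (h : isSink (zipper d m r g L) w) :
    ∃ c : Fin 2, w = chainNode c (m - 1) := by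
  have hm : 0 < m := Nat.pos_of_ne_zero (NeZero.ne m)
  cases w with
  | h1 a => exact absurd ⟨ZNode.u ⟨0, hm⟩, by simp [zipper, zEdge]⟩ h
  | h2 a => exact absurd ⟨ZNode.v ⟨0, hm⟩, by simp [zipper, zEdge]⟩ h
  | v i =>
    refine ⟨0, ?_⟩
    by_contra hne
    have hi : (i : ℕ) + 1 < m := by
      have : (i : ℕ) ≠ m - 1 := fun h' => hne (by simp [chainNode, Fin.ext_iff, h'])
      omega
    exact h ⟨ZNode.v ⟨i + 1, hi⟩, rfl⟩
  | u i =>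
    refine ⟨1, ?_⟩
    by_contra hne
    have hi : (i : ℕ) + 1 < m := by
      have : (i : ℕ) ≠ m - 1 := fun h' => hne (by simp [chainNode, Fin.ext_iff, h'])
      omega
    exact h ⟨ZNode.u ⟨i + 1, hi⟩, rfl⟩

theorem chainNode_last_isSink {r g L : ℝ} (c : Fin 2) :
    isSink (zipper d m r g L) (chainNode c (m - 1)) := by
  rintro ⟨w, hw⟩
  have hm : 0 < m := Nat.pos_of_ne_zero (NeZero.ne m)
  have : (m - 1) % m = m - 1 := Nat.mod_eq_of_lt (by omega)
  fin_cases c <;> cases w <;> simp [chainNode, zipper, zEdge, this] at hw <;> omega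

end Zipper

section LowerBound

variable {d m : ℕ}

def VBelow (K : ℕ) (R : Finset (ZNode d m)) : Prop :=
  ∀ i : Fin m, ZNode.v i ∈ R → (i : ℕ) < K

theorem VBelow.mono {K K' : ℕ} {R R' : Finset (ZNode d m)} (h : VBelow K R) (hK : K ≤ K')
    (hR : R' ⊆ R) : VBelow K' R' :=
  fun i hi => (h i (hR hi)).trans_le hK

theorem VBelow.union {K : ℕ} {R T : Finset (ZNode d m)} (hR : VBelow K R) (hT : VBelow K T) :
    VBelow K (R ∪ T) :=
  fun i hi => (mem_union.1 hi).elim (hR i) (hT i)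

/-- `hGroup (K + 1)` holds the sources feeding `v_K`. -/
def potential (K : ℕ) (R : Finset (ZNode d m)) : ℕ := K * d + #(R ∩ hGroup (K + 1))

theorem potential_mono {K : ℕ} {R R' : Finset (ZNode d m)} (hR : R' ⊆ R) :
    potential K R' ≤ potential K R :=
  Nat.add_le_add_left (card_le_card (inter_subset_inter_right hR)) _

theorem potential_union_le (K : ℕ) (R T : Finset (ZNode d m)) :
    potential K (R ∪ T) ≤ potential K R + #T := by
  unfold potential
  rw [union_inter_distrib_right]
  have := (card_union_le (R ∩ hGroup (K + 1)) (T ∩ hGroup (K + 1))).trans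
    (Nat.add_le_add_left (card_le_card inter_subset_left) _)
  omega

theorem potential_insert_of_notMem {K : ℕ} {R : Finset (ZNode d m)} {y : ZNode d m}
    (hy : y ∉ hGroup (K + 1)) : potential K (insert y R) = potential K R := by
  rw [potential, insert_inter_of_notMem hy, potential]

theorem VBelow_run {I : Inst (ZNode d m)} {K : ℕ} {l : List (Op (ZNode d m))}
    {R B : Finset (ZNode d m)} (hl : compOnly l) (hv : seqValid I R B l)
    (hnov : ∀ i, Op.compute (ZNode.v i) ∉ l) (hK : VBelow K R) : VBelow K (run R B l).1 :=
  run_induction (Q := VBelow K) (fun _ _ h => h.mono le_rfl (erase_subset _ _)) hl hv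
    (fun _ _ hy _ _ h i hi =>
      (mem_insert.1 hi).elim (fun hiy => absurd (hiy ▸ hy) (hnov i)) (h i))
    hK

variable [NeZero m]

theorem potential_succ_le {K : ℕ} (hK : K < m) {R : Finset (ZNode d m)}
    (hpar : chainParents 0 K ⊆ R) (hcard : #(insert (chainNode 0 K) R) ≤ d + 2) :
    potential (K + 1) (insert (chainNode 0 K) R) ≤ max (potential K R) (d + 1) := by
  set A := insert (chainNode 0 K) R
  set D := insert (chainNode 0 K) (chainParents 0 K : Finset (ZNode d m))
  have hdisj : Disjoint D (hGroup (K + 1 + 1)) := by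
    refine disjoint_insert_left.2 ⟨chainNode_notMem_hGroup _ _ _, ?_⟩
    refine Disjoint.mono_left (chainParents_subset 0 K) ?_
    refine disjoint_insert_left.2 ⟨chainNode_notMem_hGroup _ _ _, ?_⟩
    simpa using disjoint_hGroup_succ (K + 1)
  -- `D` and the sources of `v_(K+1)` are disjoint parts of the cache of size at most `d + 2`.
  have hsplit : #D + #(A ∩ hGroup (K + 1 + 1)) ≤ #A := by
    rw [← card_sdiff_add_card_inter A (hGroup (K + 1 + 1))]
    exact Nat.add_le_add_right (card_le_card fun w hw => mem_sdiff.2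
      ⟨insert_subset_insert _ hpar hw, disjoint_left.1 hdisj hw⟩) _
  rw [card_insert_of_notMem (chainNode_notMem_chainParents hK), card_chainParents] at hsplit
  unfold potential
  split_ifs at hsplit with hK0
  · subst hK0
    omega
  · have hsub : hGroup (K + 1) ⊆ (chainParents 0 K : Finset (ZNode d m)) := by
      simpa using hGroup_subset_chainParents (d := d) (m := m) 0 K
    have hR : R ∩ hGroup (K + 1) = hGroup (K + 1) := inter_eq_right.2 (hsub.trans hpar)
    rw [hR, card_hGroup, Nat.succ_mul]
    omega

theorem exists_potential_le_insert {K c₀ : ℕ} (hc₀ : d + 1 ≤ c₀) {R : Finset (ZNode d m)}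
    {y : ZNode d m} (hne : ∃ u, zEdge d m u y) (hpar : ∀ u, zEdge d m u y → u ∈ R)
    (hcard : #(insert y R) ≤ d + 2) (hK : VBelow K R) (hΦ : potential K R ≤ c₀) :
    ∃ K' ≥ K, VBelow K' (insert y R) ∧ potential K' (insert y R) ≤ c₀ := by
  have keep : y ∉ hGroup (K + 1) → (∀ i : Fin m, y = .v i → (i : ℕ) < K) →
      ∃ K' ≥ K, VBelow K' (insert y R) ∧ potential K' (insert y R) ≤ c₀ := fun hy hv =>
    ⟨K, le_rfl, fun i hi => (mem_insert.1 hi).elim (fun h => hv i h.symm) (hK i),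
      (potential_insert_of_notMem hy).trans_le hΦ⟩
  cases y with
  | h1 a => obtain ⟨u, hu⟩ := hne; cases u <;> exact hu.elim
  | h2 a => obtain ⟨u, hu⟩ := hne; cases u <;> exact hu.elim
  | u i => exact keep (by simp) (by simp)
  | v i =>
    have hiK : (i : ℕ) ≤ K := by
      rcases Nat.eq_zero_or_pos i with h | h
      · omega
      · have := hK ⟨i - 1, by omega⟩ (hpar _ (show (i : ℕ) = i - 1 + 1 by omega))
        simp only at this
        omega
    rcases hiK.lt_or_eq with hlt | hKi
    · exact keep (by simp) fun j hj => by cases hj; exact hlt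
    subst hKi
    rw [← chainNode_zero] at hpar hcard ⊢
    refine ⟨i + 1, by omega, fun j hj => ?_,
      (potential_succ_le i.isLt (fun w hw => hpar w ((zEdge_chainNode_iff i.isLt).2 hw))
        hcard).trans (max_le hΦ hc₀)⟩
    rcases mem_insert.1 hj with hj | hj
    · rw [chainNode_zero] at hj
      cases hj
      omega
    · exact (hK j hj).trans (by omega)

theorem exists_potential_le_run {r g L : ℝ} (hr : r ≤ d + 2) {K c₀ : ℕ} (hc₀ : d + 1 ≤ c₀)
    {l : List (Op (ZNode d m))} {R B : Finset (ZNode d m)} (hl : compOnly l)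
    (hv : seqValid (zipper d m r g L) R B l) (hK : VBelow K R) (hΦ : potential K R ≤ c₀) :
    ∃ K' ≥ K, VBelow K' (run R B l).1 ∧ potential K' (run R B l).1 ≤ c₀ :=
  run_induction (Q := fun R => ∃ K' ≥ K, VBelow K' R ∧ potential K' R ≤ c₀)
    (fun _ _ ⟨_, hK', hR, hΦ⟩ => ⟨_, hK', hR.mono le_rfl (erase_subset _ _),
      (potential_mono (erase_subset _ _)).trans hΦ⟩)
    hl hv
    (fun _ _ _ hok hmem ⟨_, hK', hR, hΦ⟩ =>
      let ⟨K'', hK'', h⟩ := exists_potential_le_insert hc₀ hok.1 hok.2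
        (card_le_of_memOK_zipper hr hmem) hR hΦ
      ⟨K'', hK'.trans hK'', h⟩)
    ⟨K, le_rfl, hK, hΦ⟩

/-- The invariant after processor `0` has loaded `ℓ` values. -/
def LoadInvariant (ℓ : ℕ) (c : Config (ZNode d m) 2) : Prop :=
  ∃ K, VBelow K (c.R 0) ∧ VBelow K (c.R 1) ∧ VBelow K c.B ∧ potential K (c.R 0) ≤ ℓ + d + 1

theorem LoadInvariant.step {r g L : ℝ} (hr : r ≤ d + 2) {ℓ : ℕ} {c : Config (ZNode d m) 2}
    {S : Superstep (ZNode d m) 2} (hS : ssValid (zipper d m r g L) c S)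
    (hnov : ∀ i, Op.compute (ZNode.v i) ∉ S.comp 1) (h : LoadInvariant ℓ c) :
    LoadInvariant (ℓ + (S.load 0).length) (stepConfig c S) := by
  obtain ⟨hcomp, hseq, hsave, hload, -⟩ := hS
  obtain ⟨K, h0, h1, hB, hΦ⟩ := h
  obtain ⟨K', hKK', h0', hΦ'⟩ :=
    exists_potential_le_run hr (by omega) (hcomp (0 : Fin 2)) (hseq (0 : Fin 2)) h0 hΦ
  have hcomp' : ∀ p, VBelow K' (afterComp c S p) := by
    intro p
    fin_cases p
    exacts [h0',
      (VBelow_run (hcomp (1 : Fin 2)) (hseq (1 : Fin 2)) hnov h1).mono hKK' subset_rfl]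
  have hB' : VBelow K' (newB c S) := by
    refine (hB.mono hKK' subset_rfl).union fun i hi => ?_
    obtain ⟨p, -, hp⟩ := mem_biUnion.1 hi
    exact hcomp' p i (hsave p _ (List.mem_toFinset.1 hp))
  have hload' : ∀ p, VBelow K' (afterLoad c S p) := fun p =>
    ((hcomp' p).union (hB'.mono le_rfl fun v hv => hload p v (List.mem_toFinset.1 hv))).mono
      le_rfl (afterLoad_subset c S p)
  refine ⟨K', hload' 0, hload' 1, hB', ?_⟩
  calc potential K' (afterLoad c S 0)
      ≤ potential K' (afterComp c S 0) + #(S.load 0).toFinset :=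
        (potential_mono (afterLoad_subset c S 0)).trans (potential_union_le _ _ _)
    _ ≤ ℓ + (S.load 0).length + d + 1 := by
        have := List.toFinset_card_le (S.load 0)
        unfold afterComp
        omega

theorem mul_le_sum_load_length {r g L : ℝ} (hd : 0 < d) (hr : r ≤ d + 2)
    {sched : Schedule (ZNode d m) 2} (hV : Valid (zipper d m r g L) sched)
    (hres : ∀ S ∈ sched, ∀ p : Fin 2, ∀ i : Fin m, Op.compute (ZNode.v i) ∈ S.comp p → p = 0) :
    m * d ≤ (sched.map fun S => (S.load 0).length).sum + d + 1 := by
  obtain ⟨B₀, hB₀, hvalid, hsink⟩ := hV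
  have hinit : LoadInvariant 0 (⟨fun _ => ∅, B₀⟩ : Config (ZNode d m) 2) := by
    refine ⟨0, by simp [VBelow], by simp [VBelow], fun i hi => ?_, by simp [potential]⟩
    rw [hB₀, ← chainNode_zero] at hi
    exact absurd (exists_zEdge_chainNode hd i.isLt) hi
  obtain ⟨K, -, -, hB, hΦ⟩ := runSched_induction (Inv := LoadInvariant)
    (fun S : Superstep (ZNode d m) 2 => (S.load 0).length) hvalid
    (fun S hS _ _ hc h => h.step hr hc fun i hi => absurd (hres S hS 1 i hi) (by decide)) hinit
  have hm : 0 < m := Nat.pos_of_ne_zero (NeZero.ne m)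
  have hlast := hB _ (hsink _ (chainNode_last_isSink (m := m) 0))
  rw [Fin.val_ofNat, Nat.mod_eq_of_lt (by omega)] at hlast
  have hmK : m * d ≤ K * d := Nat.mul_le_mul_right d (by omega)
  have hΦ' : potential K _ ≤ 0 + (sched.map fun S => (S.load 0).length).sum + d + 1 := hΦ
  unfold potential at hΦ'
  omega

theorem mul_sub_le_syncCost {r g L : ℝ} (hd : 0 < d) (hr : r ≤ d + 2) (hg : 0 ≤ g)
    (hL : 0 ≤ L)
    {sched : Schedule (ZNode d m) 2} (hV : Valid (zipper d m r g L) sched)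
    (hres : ∀ S ∈ sched, ∀ p : Fin 2, ∀ i : Fin m, Op.compute (ZNode.v i) ∈ S.comp p → p = 0) :
    ((m : ℝ) * d - d - 1) * g ≤ syncCost (zipper d m r g L) sched := by
  have hloads :
      ((m * d : ℕ) : ℝ) ≤ ((sched.map fun S => (S.load 0).length).sum : ℕ) + d + 1 := by
    exact_mod_cast mul_le_sum_load_length hd hr hV hres
  have hcost : (sched.map fun S => ((S.load 0).length : ℝ)).sum * g ≤
      syncCost (zipper d m r g L) sched := by
    have h :=
      (costsNonneg_zipper (r := r) hg hL).sum_ioCost_load_le_syncCost (0 : Fin 2) sched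
    simp only [ioCost_zipper] at h
    rw [← List.sum_map_mul_right]
    exact h
  rw [Nat.cast_list_sum, List.map_map, Function.comp_def] at hloads
  push_cast at hloads
  nlinarith

end LowerBound

section ChainSchedule

variable {d m : ℕ}

/-- Processor `p` keeps the sources `hGroup p` and alternates between the two chains. -/
def alternating (j : ℕ) (p : Fin 2) : Fin 2 := ⟨(p.val + j + 1) % 2, Nat.mod_lt _ two_pos⟩

theorem alternating_surjective (j : ℕ) : Function.Surjective (alternating j) := fun c =>
  ⟨⟨(c.val + j + 1) % 2, Nat.mod_lt _ two_pos⟩, Fin.ext (by simp [alternating]; omega)⟩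

theorem hGroup_alternating (j : ℕ) (p : Fin 2) :
    (hGroup ((alternating j p).val + j + 1) : Finset (ZNode d m)) = hGroup p.val :=
  hGroup_congr (by simp [alternating]; omega)

variable [NeZero m]

def chainStep (σ : ℕ → Fin 2 → Fin 2) (j : ℕ) (p : Fin 2) : ZNode d m := chainNode (σ j p) j

def chainCache (σ : ℕ → Fin 2 → Fin 2) (j : ℕ) (p : Fin 2) : Finset (ZNode d m) :=
  if j < m then chainParents (σ j p) j else ∅

noncomputable def chainSchedule (σ : ℕ → Fin 2 → Fin 2) : Schedule (ZNode d m) 2 :=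
  pipeline (chainCache σ) (chainStep σ) m

theorem pipelinePlan_chainSchedule {r g L : ℝ} (hd : 0 < d) (hr : (d : ℝ) + 2 ≤ r)
    {σ : ℕ → Fin 2 → Fin 2} (hσ : ∀ j, Function.Surjective (σ j)) :
    PipelinePlan (zipper d m r g L) (hGroup 0 ∪ hGroup 1) (chainCache σ) (chainStep σ) m := by
  have hm : 0 < m := Nat.pos_of_ne_zero (NeZero.ne m)
  refine ⟨fun p => ?_, fun j _ p => ?_, fun j hj p => exists_zEdge_chainNode hd hj,
    fun j hj p u hu => ?_, fun j hj p => ?_, fun j hj p => ?_⟩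
  · simpa [chainCache, chainParents, hm] using hGroup_subset_sources (d := d) (m := m) _
  · refine memOK_zipper_of_card_le hr ?_
    unfold chainCache
    split_ifs
    · exact (card_chainParents_le _ _).trans (Nat.le_succ _)
    · simp
  · unfold chainCache
    rw [if_pos hj]
    exact (zEdge_chainNode_iff hj).1 hu
  · refine memOK_zipper_of_card_le hr ((card_insert_le _ _).trans ?_)
    have := card_chainParents_le (d := d) (m := m) (σ j p) j
    simp only [chainCache, if_pos hj]
    omega
  · unfold chainCache
    split_ifs with hj1
    · intro w hw
      obtain ⟨q, hq⟩ := hσ j (σ (j + 1) p)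
      rcases mem_insert.1 (chainParents_subset _ _ hw) with rfl | hw
      · refine mem_union_right _ (mem_union_right _ (mem_image.2 ⟨q, mem_univ _, ?_⟩))
        simp [chainStep, hq]
      · exact mem_union_right _ (mem_union_left _ (hGroup_subset_sources _ hw))
    · exact empty_subset _

theorem valid_chainSchedule {r g L : ℝ} (hd : 0 < d) (hr : (d : ℝ) + 2 ≤ r)
    {σ : ℕ → Fin 2 → Fin 2} (hσ : ∀ j, Function.Surjective (σ j)) :
    Valid (zipper d m r g L) (chainSchedule σ) := by
  have hm : 0 < m := Nat.pos_of_ne_zero (NeZero.ne m)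
  refine (pipelinePlan_chainSchedule hd hr hσ).valid (initB_zipper hd) fun w hw => ?_
  obtain ⟨c, rfl⟩ := isSink_zipper hw
  obtain ⟨p, hp⟩ := hσ (m - 1) c
  exact ⟨m - 1, by omega, p, by simp [chainStep, hp]⟩

theorem exists_chainNode_of_mem_comp {σ : ℕ → Fin 2 → Fin 2} {S : Superstep (ZNode d m) 2}
    (hS : S ∈ chainSchedule σ) {p : Fin 2} {w : ZNode d m} (hw : Op.compute w ∈ S.comp p) :
    ∃ j, w = chainNode (σ j p) j :=
  let ⟨j, _, hj⟩ := mem_pipeline_comp hS hw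
  ⟨j, hj.symm⟩

theorem chainSchedule_id_restricted :
    (∀ S ∈ (chainSchedule fun _ p => p : Schedule (ZNode d m) 2), ∀ p : Fin 2, ∀ i : Fin m,
      Op.compute (ZNode.v i) ∈ S.comp p → p = 0) ∧
    (∀ S ∈ (chainSchedule fun _ p => p : Schedule (ZNode d m) 2), ∀ p : Fin 2, ∀ i : Fin m,
      Op.compute (ZNode.u i) ∈ S.comp p → p = 1) := by
  constructor <;> intro S hS p i hi <;>
    obtain ⟨j, hj⟩ := exists_chainNode_of_mem_comp hS hi <;> fin_cases p <;> simp_all [chainNode]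

theorem syncCost_alternating_le {r g L : ℝ} (hg : 0 ≤ g) :
    syncCost (zipper d m r g L) (chainSchedule alternating) ≤
      d * g + L + m * (1 + g + g + L) := by
  have hm : 0 < m := Nat.pos_of_ne_zero (NeZero.ne m)
  refine syncCost_pipeline_le ?_ fun j hj => ?_
  · refine (ssCost_le (a := 0) (b := 0) (c := d * g) (fun _ => ?_) (fun _ => ?_)
      (fun p => ?_) le_rfl le_rfl (by positivity)).trans (by simp [zipper])
    · simp [loadStep, listCost]
    · simp [loadStep, ioCost]
    · rw [ioCost_zipper]
      simp [loadStep, chainCache, hm, card_chainParents]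
  · refine ssCost_le (fun _ => ?_) (fun _ => ?_) (fun (p : Fin 2) => ?_)
      zero_le_one hg hg
    · simp [transition, listCost, opCost, zipper]
    · simp [transition, ioCost_zipper]
    · rw [ioCost_zipper]
      unfold transition
      rw [length_toList]
      refine mul_le_of_le_one_left hg ?_
      -- both caches of `p` contain `hGroup p`, so only the chain predecessor is loaded
      have hsub : chainCache alternating (j + 1) p \
          insert (chainStep alternating j p) (chainCache alternating j p) ⊆
          {(chainNode (alternating (j + 1) p) j : ZNode d m)} := by
        intro w hw
        obtain ⟨hw1, hw2⟩ := mem_sdiff.1 hw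
        unfold chainCache at hw1 hw2
        split_ifs at hw1
        · rcases mem_insert.1 (chainParents_subset _ _ hw1) with h | h
          · simpa using h
          · rw [hGroup_alternating, ← hGroup_alternating j] at h
            rw [if_pos hj] at hw2
            exact absurd (mem_insert_of_mem (hGroup_subset_chainParents _ _ h)) hw2
        · simp at hw1
      exact_mod_cast (card_le_card hsub).trans (card_singleton _).le

end ChainSchedule

theorem div_ten_mul_le_mul_sub {d m : ℕ} {g : ℝ} (hd : 5 ≤ d) (hm : d ≤ m) (hg : 1 ≤ g) :
    (d : ℝ) / 10 * (d * g + m * (1 + 2 * g)) ≤ ((m : ℝ) * d - d - 1) * g := by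
  have hd' : (5 : ℝ) ≤ d := by exact_mod_cast hd
  have hm' : (d : ℝ) ≤ m := by exact_mod_cast hm
  nlinarith [mul_nonneg (mul_nonneg (by positivity : (0 : ℝ) ≤ d) (by linarith : (0 : ℝ) ≤ g))
      (by linarith : (0 : ℝ) ≤ m - d),
    mul_nonneg (mul_nonneg (by positivity : (0 : ℝ) ≤ d) (by positivity : (0 : ℝ) ≤ m))
      (by linarith : (0 : ℝ) ≤ g - 1),
    mul_nonneg (mul_nonneg (by positivity : (0 : ℝ) ≤ d) (by linarith : (0 : ℝ) ≤ g))
      (by linarith : (0 : ℝ) ≤ m - 5),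
    mul_nonneg (by linarith : (0 : ℝ) ≤ g) (by linarith : (0 : ℝ) ≤ 2 * d - 1)]

/-- For `d ≥ 5`, `m ≥ d`, `g ≥ 1`, on the zipper DAG `Z(d,m)` with
`P = 2`, `r = d+2`, `L = 0`: the minimum synchronous cost `OPT'` over valid schedules
that compute every `v_i` on processor 1 and every `u_i` on processor 2 satisfies
`OPT' ≥ (d/10) · OPT`, where `OPT` is the unrestricted optimum. -/
theorem statement_0 (d m : ℕ) (hd : 5 ≤ d) (hm : d ≤ m) (g : ℝ) (hg : 1 ≤ g) :
    ((d : ℝ) / 10) *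
      sInf {c : ℝ | ∃ sched : Schedule (ZNode d m) 2,
        Valid (zipper d m ((d : ℝ) + 2) g 0) sched ∧
        syncCost (zipper d m ((d : ℝ) + 2) g 0) sched = c}
    ≤
    sInf {c : ℝ | ∃ sched : Schedule (ZNode d m) 2,
        Valid (zipper d m ((d : ℝ) + 2) g 0) sched ∧
        (∀ S ∈ sched, ∀ p : Fin 2, ∀ i : Fin m,
          Op.compute (ZNode.v i) ∈ S.comp p → p = 0) ∧
        (∀ S ∈ sched, ∀ p : Fin 2, ∀ i : Fin m,
          Op.compute (ZNode.u i) ∈ S.comp p → p = 1) ∧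
        syncCost (zipper d m ((d : ℝ) + 2) g 0) sched = c} := by
  have : NeZero m := ⟨by omega⟩
  have hd₀ : 0 < d := by omega
  have hg₀ : 0 ≤ g := by linarith
  calc (d : ℝ) / 10 * sInf _
      ≤ d / 10 * syncCost (zipper d m ((d : ℝ) + 2) g 0) (chainSchedule alternating) := by
        gcongr
        refine csInf_le ⟨0, ?_⟩
          ⟨_, valid_chainSchedule hd₀ le_rfl alternating_surjective, rfl⟩
        rintro _ ⟨sched, -, rfl⟩
        exact (costsNonneg_zipper hg₀ le_rfl).syncCost_nonneg sched
    _ ≤ d / 10 * (d * g + m * (1 + 2 * g)) := by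
        gcongr
        linarith [syncCost_alternating_le (d := d) (m := m) (r := (d : ℝ) + 2) (L := 0) hg₀]
    _ ≤ ((m : ℝ) * d - d - 1) * g := div_ten_mul_le_mul_sub hd hm hg
    _ ≤ sInf _ := by
        refine le_csInf ⟨_, _, valid_chainSchedule hd₀ le_rfl fun _ => Function.surjective_id,
          chainSchedule_id_restricted.1, chainSchedule_id_restricted.2, rfl⟩ ?_
        rintro _ ⟨sched, hV, hres, -, rfl⟩
        exact mul_sub_le_syncCost hd₀ le_rfl hg₀ le_rfl hV hres

end MBSP
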